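/- Let G be a group with cyclic derived subgroup G' (so G is cyclic-by-abelian), and for each g ∈ G fix an integer s_g with a^g = a^{s_g} for all a ∈ G'. Then for all g, h ∈ G and n ≥ 0, one has (gh)^n = g^n h^n [h,g]^{S_{s_g,s_h}(n)}, where S_{s,t}(n) = ∑_{0 ≤ i < j < n} s^i t^j and [h,g] = h^{-1}g^{-1}hg. -/

import Mathlib

/-! Put `c = [h, g]`, so `h g = g h c`, and suppose `g`, `h` conjugate `c` to `c^u`, `c^v`. Then
`c^m k = k c^(m t)` whenever `k` conjugates `c` to `c^t`, and pushing `g` leftwards through `h^n`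
leaves `c^(1 + v + ⋯ + v^(n-1))` behind. Hence `(g h)^(n+1) = g^n h^n c^S g h` rearranges to
`g^(n+1) h^(n+1) c^((1 + ⋯ + v^(n-1) + S u) v)`, and this exponent obeys the recursion of `S2 u v`. -/

/-- `S2 s t n = ∑_{0 ≤ i < j < n} s^i t^j`. -/
def S2 (s t : ℤ) (n : ℕ) : ℤ := ∑ j ∈ Finset.range n, ∑ i ∈ Finset.range j, s ^ i * t ^ j

theorem S2_succ (u v : ℤ) (n : ℕ) :
    S2 u v (n + 1) = ((∑ j ∈ Finset.range n, v ^ j) + S2 u v n * u) * v := by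
  simp only [S2, Finset.sum_range_succ', Finset.sum_range_zero, add_zero, Finset.sum_mul,
    add_mul, pow_succ, pow_zero, one_mul]
  rw [Finset.sum_add_distrib, add_comm]
  congr 1
  refine Finset.sum_congr rfl fun j _ => Finset.sum_congr rfl fun i _ => ?_
  ring

section ConjPower

variable {G : Type*} [Group G] {c g h k : G} {t u v : ℤ}

theorem zpow_mul_eq_mul_zpow_of_conj_eq (hk : k⁻¹ * c * k = c ^ t) (m : ℤ) :
    c ^ m * k = k * c ^ (m * t) := by
  have hconj : (k⁻¹ * c * k) ^ m = k⁻¹ * c ^ m * k := by simpa using conj_zpow (a := k⁻¹)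
  rw [mul_comm, zpow_mul, ← hk, hconj]
  group

theorem zpow_mul_pow_eq_mul_zpow_of_conj_eq (hk : k⁻¹ * c * k = c ^ t) (n : ℕ) (m : ℤ) :
    c ^ m * k ^ n = k ^ n * c ^ (m * t ^ n) := by
  induction n generalizing m with
  | zero => simp
  | succ n ih =>
    rw [pow_succ, ← mul_assoc, ih, mul_assoc, zpow_mul_eq_mul_zpow_of_conj_eq hk, ← mul_assoc,
      pow_succ t, mul_assoc m]

theorem pow_mul_eq_mul_pow_mul_zpow_geom_sum (hc : h * g = g * h * c)
    (hh : h⁻¹ * c * h = c ^ v) (n : ℕ) :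
    h ^ n * g = g * h ^ n * c ^ (∑ j ∈ Finset.range n, v ^ j) := by
  induction n with
  | zero => simp
  | succ n ih =>
    have hc_pow : c * h ^ n = h ^ n * c ^ (v ^ n) := by
      simpa using zpow_mul_pow_eq_mul_zpow_of_conj_eq hh n 1
    calc h ^ (n + 1) * g = h * g * (h ^ n * c ^ (∑ j ∈ Finset.range n, v ^ j)) := by
          rw [pow_succ', mul_assoc, ih]
          group
      _ = g * h * (c * h ^ n) * c ^ (∑ j ∈ Finset.range n, v ^ j) := by
          rw [hc]
          group
      _ = g * h ^ (n + 1) * c ^ (∑ j ∈ Finset.range (n + 1), v ^ j) := by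
          rw [hc_pow, Finset.sum_range_succ, zpow_add, pow_succ']
          group

theorem mul_pow_eq_pow_mul_pow_mul_zpow_S2 (hc : h * g = g * h * c)
    (hg : g⁻¹ * c * g = c ^ u) (hh : h⁻¹ * c * h = c ^ v) (n : ℕ) :
    (g * h) ^ n = g ^ n * h ^ n * c ^ S2 u v n := by
  induction n with
  | zero => simp [S2]
  | succ n ih =>
    calc (g * h) ^ (n + 1) = g ^ n * h ^ n * (c ^ S2 u v n * g) * h := by
          rw [pow_succ, ih]
          group
      _ = g ^ n * (h ^ n * g) * c ^ (S2 u v n * u) * h := by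
          rw [zpow_mul_eq_mul_zpow_of_conj_eq hg]
          group
      _ = g ^ (n + 1) * h ^ n * (c ^ ((∑ j ∈ Finset.range n, v ^ j) + S2 u v n * u) * h) := by
          rw [pow_mul_eq_mul_pow_mul_zpow_geom_sum hc hh, zpow_add, pow_succ]
          group
      _ = g ^ (n + 1) * h ^ (n + 1) * c ^ S2 u v (n + 1) := by
          rw [zpow_mul_eq_mul_zpow_of_conj_eq hh, S2_succ, pow_succ]
          group

end ConjPower

theorem stmt18_general (G : Type*) [Group G]
    (s : G → ℤ) (hs : ∀ g : G, ∀ a ∈ commutator G, g⁻¹ * a * g = a ^ (s g)) :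
    ∀ g h : G, ∀ n : ℕ,
      (g * h) ^ n = g ^ n * h ^ n * (h⁻¹ * g⁻¹ * h * g) ^ (S2 (s g) (s h) n) := by
  intro g h n
  have hmem : h⁻¹ * g⁻¹ * h⁻¹⁻¹ * g⁻¹⁻¹ ∈ commutator G :=
    Subgroup.commutator_mem_commutator (Subgroup.mem_top _) (Subgroup.mem_top _)
  rw [inv_inv, inv_inv] at hmem
  exact mul_pow_eq_pow_mul_pow_mul_zpow_S2 (by group) (hs g _ hmem) (hs h _ hmem) n

theorem stmt18 (G : Type*) [Group G] (hcyc : IsCyclic (commutator G))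
    (s : G → ℤ) (hs : ∀ g : G, ∀ a ∈ commutator G, g⁻¹ * a * g = a ^ (s g)) :
    ∀ g h : G, ∀ n : ℕ,
      (g * h) ^ n = g ^ n * h ^ n * (h⁻¹ * g⁻¹ * h * g) ^ (S2 (s g) (s h) n) :=
  stmt18_general G s hs
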